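/- arXiv:1507.00778 — 2 statements merged into one kernel-verified Lean document; each statement's English description precedes it below -/
import Mathlib

section
/- Let μ : ℕ → (0,∞). Define Δ_r(s) = μ(r+s)/μ(r) − μ(r+s−1)/μ(r−1) for integers r ≥ 1, s ≥ 0, and define H_α(β,k) for α ≥ 1, 1 ≤ k ≤ β by the recursion H_α(β,β) = Δ_α(β)·μ(0) for β ≥ 1, and H_α(β,k) = Δ_α(k)·μ(β−k) + Σ_{l=1}^{β−k} Δ_α(l)·H_l(β−l,k) for β ≥ 2 and 1 ≤ k ≤ β−1. Let g^k_{*,0} ≥ 0 be arbitrary for k ≥ 1, and define g^α_{*,β} := g^α_{*,0} + (1/μ(β))·Σ_{k=1}^{β} H_α(β,k)·g^k_{*,0} for α ≥ 1, β ≥ 1. Then for all β ≥ 1, Σ_{k=1}^{β} μ(k)·μ(β−k)·g^k_{*,β−k} = μ(0)·μ(β)·Σ_{k=1}^{β} g^k_{*,0}. -/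
/-!
Unrolling the recursion, `H α (k + m) k` is a sum over chains `α → l₁ → ⋯ → lᵣ → k` of products
`Δ α l₁ ⋯ Δ lᵣ k` weighted by `μ` of the leftover mass `m - l₁ - ⋯ - lᵣ`. Peeling off the last link
of a chain instead of the first gives a dual recursion in which `Δ l k` is summed over its first
argument, where it telescopes. By induction this yields
`μ k * μ m + ∑ l ∈ [1, m], μ l * H l (k + m - l) k = μ 0 * μ (k + m)`, and substituting the rates
`gs` and exchanging the order of summation turns the claim into this identity.
-/

open Finset

section

variable {μ : ℕ → ℝ} {Δ : ℕ → ℕ → ℝ} {H : ℕ → ℕ → ℕ → ℝ}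

theorem sum_Icc_sum_Icc_sub_comm {M : Type*} [AddCommMonoid M] (m : ℕ) (f : ℕ → ℕ → M) :
    ∑ l ∈ Icc 1 m, ∑ t ∈ Icc 1 (m - l), f l t = ∑ t ∈ Icc 1 m, ∑ l ∈ Icc 1 (m - t), f l t :=
  sum_comm' fun _ _ => by simp only [mem_Icc]; omega

theorem sum_Δ_telescope
    (hΔ : ∀ r s : ℕ, 1 ≤ r → Δ r s = μ (r + s) / μ r - μ (r + s - 1) / μ (r - 1))
    (n j : ℕ) : ∑ l ∈ Icc 1 n, Δ l j = μ (n + j) / μ n - μ j / μ 0 := by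
  induction n with
  | zero => simp
  | succ n ih =>
    rw [sum_Icc_succ_top (by omega), ih, hΔ (n + 1) j (by omega),
      show n + 1 + j - 1 = n + j by omega, Nat.add_sub_cancel]
    ring

theorem H_recursion (hHdiag : ∀ α β : ℕ, 1 ≤ α → 1 ≤ β → H α β β = Δ α β * μ 0)
    (hHrec : ∀ α β k : ℕ, 1 ≤ α → 2 ≤ β → 1 ≤ k → k ≤ β - 1 →
      H α β k = Δ α k * μ (β - k) + ∑ l ∈ Icc 1 (β - k), Δ α l * H l (β - l) k)
    {α β k : ℕ} (hα : 1 ≤ α) (hk : 1 ≤ k) (hkβ : k ≤ β) :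
    H α β k = Δ α k * μ (β - k) + ∑ l ∈ Icc 1 (β - k), Δ α l * H l (β - l) k := by
  obtain rfl | hlt := hkβ.eq_or_lt
  · simp [hHdiag α k hα hk]
  · exact hHrec α β k hα (by omega) hk (by omega)

variable (hH : ∀ {α β k : ℕ}, 1 ≤ α → 1 ≤ k → k ≤ β →
  H α β k = Δ α k * μ (β - k) + ∑ l ∈ Icc 1 (β - k), Δ α l * H l (β - l) k)
include hH

theorem H_recursion_dual (m : ℕ) {α k : ℕ} (hα : 1 ≤ α) (hk : 1 ≤ k) :
    H α (k + m) k = Δ α k * μ m + ∑ l ∈ Icc 1 m, Δ l k * H α m l := by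
  induction m using Nat.strong_induction_on generalizing α k with
  | _ m ih =>
  rw [hH hα hk (by omega), Nat.add_sub_cancel_left]
  congr 1
  calc ∑ l ∈ Icc 1 m, Δ α l * H l (k + m - l) k
      = ∑ l ∈ Icc 1 m, (Δ α l * Δ l k * μ (m - l)
          + ∑ t ∈ Icc 1 (m - l), Δ t k * (Δ α l * H l (m - l) t)) := by
        refine sum_congr rfl fun l hl => ?_
        rw [mem_Icc] at hl
        rw [show k + m - l = k + (m - l) by omega, ih (m - l) (by omega) hl.1 hk, mul_add,
          mul_sum, ← mul_assoc]
        simp only [mul_left_comm]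
    _ = ∑ t ∈ Icc 1 m, (Δ α t * Δ t k * μ (m - t)
          + Δ t k * ∑ l ∈ Icc 1 (m - t), Δ α l * H l (m - l) t) := by
        simp only [sum_add_distrib, mul_sum]
        rw [sum_Icc_sum_Icc_sub_comm]
    _ = ∑ t ∈ Icc 1 m, Δ t k * H α m t := by
        refine sum_congr rfl fun t ht => ?_
        rw [mem_Icc] at ht
        rw [hH hα ht.1 ht.2]
        ring

theorem mul_add_sum_mul_H
    (hΔ : ∀ r s : ℕ, 1 ≤ r → Δ r s = μ (r + s) / μ r - μ (r + s - 1) / μ (r - 1))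
    (hμ : ∀ n, μ n ≠ 0) (m : ℕ) {k : ℕ} (hk : 1 ≤ k) :
    μ k * μ m + ∑ l ∈ Icc 1 m, μ l * H l (k + m - l) k = μ 0 * μ (k + m) := by
  induction m using Nat.strong_induction_on generalizing k with
  | _ m ih =>
  have hsum : ∑ l ∈ Icc 1 m, μ l * H l (k + m - l) k = ∑ t ∈ Icc 1 m, Δ t k * (μ 0 * μ m) :=
    calc ∑ l ∈ Icc 1 m, μ l * H l (k + m - l) k
        = ∑ l ∈ Icc 1 m, (μ l * Δ l k * μ (m - l)
            + ∑ t ∈ Icc 1 (m - l), Δ t k * (μ l * H l (m - l) t)) := by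
          refine sum_congr rfl fun l hl => ?_
          rw [mem_Icc] at hl
          rw [show k + m - l = k + (m - l) by omega, H_recursion_dual hH (m - l) hl.1 hk, mul_add,
            mul_sum, ← mul_assoc]
          simp only [mul_left_comm]
      _ = ∑ t ∈ Icc 1 m, (μ t * Δ t k * μ (m - t)
            + Δ t k * ∑ l ∈ Icc 1 (m - t), μ l * H l (m - l) t) := by
          simp only [sum_add_distrib, mul_sum]
          rw [sum_Icc_sum_Icc_sub_comm]
      _ = ∑ t ∈ Icc 1 m, Δ t k * (μ 0 * μ m) := by
          refine sum_congr rfl fun t ht => ?_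
          rw [mem_Icc] at ht
          have h := ih (m - t) (by omega) ht.1
          rw [Nat.add_sub_cancel' ht.2] at h
          rw [← h]
          ring
  rw [hsum, ← sum_mul, sum_Δ_telescope hΔ, add_comm m k]
  field_simp [hμ m, hμ 0]
  ring

end

theorem mul_gs_eq {μ : ℕ → ℝ} {H : ℕ → ℕ → ℕ → ℝ} {g0 : ℕ → ℝ} {gs : ℕ → ℕ → ℝ}
    (hμ : ∀ n, μ n ≠ 0) (hgs0 : ∀ α : ℕ, gs α 0 = g0 α)
    (hgs : ∀ α β : ℕ, 1 ≤ α → 1 ≤ β →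
      gs α β = g0 α + (1 / μ β) * ∑ k ∈ Icc 1 β, H α β k * g0 k)
    {α : ℕ} (hα : 1 ≤ α) (n : ℕ) :
    μ n * gs α n = μ n * g0 α + ∑ t ∈ Icc 1 n, H α n t * g0 t := by
  rcases Nat.eq_zero_or_pos n with rfl | hn
  · simp [hgs0]
  · rw [hgs α n hα hn]
    field_simp [hμ n]

theorem stmt8_general
    (μ : ℕ → ℝ) (hμ : ∀ n : ℕ, 0 < μ n)
    (Δ : ℕ → ℕ → ℝ)
    (hΔ : ∀ r s : ℕ, 1 ≤ r →
      Δ r s = μ (r + s) / μ r - μ (r + s - 1) / μ (r - 1))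
    (H : ℕ → ℕ → ℕ → ℝ)
    (hHdiag : ∀ α β : ℕ, 1 ≤ α → 1 ≤ β → H α β β = Δ α β * μ 0)
    (hHrec : ∀ α β k : ℕ, 1 ≤ α → 2 ≤ β → 1 ≤ k → k ≤ β - 1 →
      H α β k = Δ α k * μ (β - k)
        + ∑ l ∈ Finset.Icc 1 (β - k), Δ α l * H l (β - l) k)
    (g0 : ℕ → ℝ)
    (gs : ℕ → ℕ → ℝ)
    (hgs0 : ∀ α : ℕ, gs α 0 = g0 α)
    (hgs : ∀ α β : ℕ, 1 ≤ α → 1 ≤ β →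
      gs α β = g0 α + (1 / μ β) * ∑ k ∈ Finset.Icc 1 β, H α β k * g0 k) :
    ∀ β : ℕ, 1 ≤ β →
      ∑ k ∈ Finset.Icc 1 β, μ k * μ (β - k) * gs k (β - k)
        = μ 0 * μ β * ∑ k ∈ Finset.Icc 1 β, g0 k := by
  intro β _
  have hμ0 n : μ n ≠ 0 := (hμ n).ne'
  have hH := @H_recursion μ Δ H hHdiag hHrec
  calc ∑ k ∈ Icc 1 β, μ k * μ (β - k) * gs k (β - k)
      = ∑ k ∈ Icc 1 β, (μ k * μ (β - k) * g0 k
          + ∑ t ∈ Icc 1 (β - k), μ k * H k (β - k) t * g0 t) := by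
        refine sum_congr rfl fun k hk => ?_
        rw [mul_assoc, mul_gs_eq hμ0 hgs0 hgs (mem_Icc.mp hk).1, mul_add, mul_sum]
        simp only [mul_assoc]
    _ = ∑ t ∈ Icc 1 β, (μ t * μ (β - t) + ∑ k ∈ Icc 1 (β - t), μ k * H k (β - k) t) * g0 t := by
        simp only [sum_add_distrib, add_mul, sum_mul]
        rw [sum_Icc_sum_Icc_sub_comm]
    _ = μ 0 * μ β * ∑ k ∈ Icc 1 β, g0 k := by
        rw [mul_sum]
        refine sum_congr rfl fun t ht => ?_
        have h := mul_add_sum_mul_H hH hΔ hμ0 (β - t) (mem_Icc.mp ht).1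
        rw [Nat.add_sub_cancel' (mem_Icc.mp ht).2] at h
        rw [h]

/-- the identity `A(0,β) = Σ_{k ≤ β} g^k_{*,0} = -A(β,0)` for
mass-migration target processes with rates defined through the coefficients
`H`. -/
theorem stmt8
    (μ : ℕ → ℝ) (hμ : ∀ n : ℕ, 0 < μ n)
    (Δ : ℕ → ℕ → ℝ)
    (hΔ : ∀ r s : ℕ, 1 ≤ r →
      Δ r s = μ (r + s) / μ r - μ (r + s - 1) / μ (r - 1))
    (H : ℕ → ℕ → ℕ → ℝ)
    (hHdiag : ∀ α β : ℕ, 1 ≤ α → 1 ≤ β → H α β β = Δ α β * μ 0)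
    (hHrec : ∀ α β k : ℕ, 1 ≤ α → 2 ≤ β → 1 ≤ k → k ≤ β - 1 →
      H α β k = Δ α k * μ (β - k)
        + ∑ l ∈ Finset.Icc 1 (β - k), Δ α l * H l (β - l) k)
    (g0 : ℕ → ℝ) (hg0nn : ∀ k : ℕ, 0 ≤ g0 k)
    (gs : ℕ → ℕ → ℝ)
    (hgs0 : ∀ α : ℕ, gs α 0 = g0 α)
    (hgs : ∀ α β : ℕ, 1 ≤ α → 1 ≤ β →
      gs α β = g0 α + (1 / μ β) * ∑ k ∈ Finset.Icc 1 β, H α β k * g0 k) :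
    ∀ β : ℕ, 1 ≤ β →
      ∑ k ∈ Finset.Icc 1 β, μ k * μ (β - k) * gs k (β - k)
        = μ 0 * μ β * ∑ k ∈ Finset.Icc 1 β, g0 k :=
  stmt8_general μ hμ Δ hΔ H hHdiag hHrec g0 gs hgs0 hgs
end

section
/- Let X be a countable set, p : X × X → [0,∞) with Σ_{y∈X} p(x,y) = 1 for every x and m_p := sup_{y∈X} Σ_{x∈X} p(x,y) < ∞, and a : X → (0,∞) satisfying Σ_{y∈X} p(x,y)·a_y + Σ_{y∈X} a_y·p(y,x) ≤ M·a_x for all x ∈ X and some constant M. Let X_n ⊆ X be a finite subset. Let (g^k_{α,β}) be a family of mass-migration rates satisfying condition (C2) with constant C, and let G^{k,l}_{α,β,γ,δ} be the associated coupling rates. For η, η' : X_n → ℕ set ‖η − η'‖ := Σ_{x∈X_n} |η(x) − η'(x)|·a_x. Then the coupled generator applied to the distance function satisfies | Σ_{x≠y ∈ X_n} p(x,y)·Σ_{k=0}^{η(x)} Σ_{l=0}^{η'(x)} G^{k,l}_{η(x),η(y),η'(x),η'(y)}·( ‖S^k_{x,y}η − S^l_{x,y}η'‖ − ‖η − η'‖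 ) | ≤ 2C·(1 + m_p + M)·‖η − η'‖. -/
/-- Tail sums of the rates: `Σ^k_{α,β} = Σ_{k' = k+1}^{α} g^{k'}_{α,β}`. -/
def Sig (g : ℕ → ℕ → ℕ → ℝ) (k α β : ℕ) : ℝ :=
  ∑ k' ∈ Finset.Icc (k + 1) α, g k' α β

/-- The coupling rates `G^{k,l}_{α,β,γ,δ}` of the mass migration process. -/
def Gc (g : ℕ → ℕ → ℕ → ℝ) (k l α β γ δ : ℕ) : ℝ :=
  if k = 0 then
    (if l = 0 then 0 else
      g l γ δ - min (g l γ δ)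
        (Sig g 0 α β - min (Sig g 0 α β) (Sig g l γ δ)))
  else if l = 0 then
    g k α β - min (g k α β)
      (Sig g 0 γ δ - min (Sig g 0 γ δ) (Sig g k α β))
  else
    min
      (g k α β - min (g k α β)
        (Sig g l γ δ - min (Sig g l γ δ) (Sig g k α β)))
      (g l γ δ - min (g l γ δ)
        (Sig g k α β - min (Sig g k α β) (Sig g l γ δ)))

/-!
Tile `[0, T]` from the top by intervals of lengths `g^1_{α,β}, g^2_{α,β}, …` (with the rest of
`[0, T]` as tile `0`), and likewise for `(γ, δ)`: `G^{k,l}` is the length of the overlap of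
tile `k` of the first tiling with tile `l` of the second. The transport cost `Σ G^{k,l} |k - l|`
is then the mass crossing the levels between `j` and `j + 1`, namely
`Σ_j |Σ^j_{α,β} - Σ^j_{γ,δ}|`, which is at most `Σ_i i |g^i_{α,β} - g^i_{γ,δ}|` and hence
controlled by (C2). Moving `k` resp. `l` particles from `x` to `y` changes the distance by at most
`|k - l| (a_x + a_y)`, and summing over pairs with weights `p(x, y)` costs the factor `1 + M` from
the rows and `M + m_p` from the columns.
-/

noncomputable def overlap (c d e f : ℝ) : ℝ := max 0 (min d f - max c e)

lemma overlap_nonneg (c d e f : ℝ) : 0 ≤ overlap c d e f := le_max_left _ _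

lemma overlap_comm (c d e f : ℝ) : overlap c d e f = overlap e f c d := by
  rw [overlap, overlap, min_comm d f, max_comm c e]

lemma overlap_self (c e f : ℝ) : overlap c c e f = 0 :=
  max_eq_left (sub_nonpos.2 ((min_le_left _ _).trans (le_max_left _ _)))

lemma overlap_add {c m d : ℝ} (e f : ℝ) (hcm : c ≤ m) (hmd : m ≤ d) :
    overlap c m e f + overlap m d e f = overlap c d e f := by
  simp only [overlap, min_def, max_def]
  split_ifs <;> linarith

lemma sum_Ico_overlap {A : ℕ → ℝ} (hA : Antitone A) (e f : ℝ) {m n : ℕ} (hmn : m ≤ n) :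
    ∑ k ∈ Finset.Ico m n, overlap (A (k + 1)) (A k) e f = overlap (A n) (A m) e f := by
  induction n, hmn using Nat.le_induction with
  | base => simp [overlap_self]
  | succ n hmn ih =>
    rw [Finset.sum_Ico_succ_top hmn, ih, add_comm,
      overlap_add e f (hA n.le_succ) (hA hmn)]

lemma abs_natCast_sub_le_sum_abs_ite_sub {k l N : ℕ} (hk : k ≤ N) (hl : l ≤ N) :
    |(k : ℝ) - l| ≤
      ∑ j ∈ Finset.range N, |(if j < k then (1 : ℝ) else 0) - if j < l then 1 else 0| := by
  have hcount {i : ℕ} (hi : i ≤ N) :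
      ∑ j ∈ Finset.range N, (if j < i then (1 : ℝ) else 0) = i := by
    rw [Finset.sum_boole, show {j ∈ Finset.range N | j < i} = Finset.range i by
      ext j; simp only [Finset.mem_filter, Finset.mem_range]; omega, Finset.card_range]
  calc |(k : ℝ) - l|
      = |∑ j ∈ Finset.range N, ((if j < k then (1 : ℝ) else 0) - if j < l then 1 else 0)| := by
        rw [Finset.sum_sub_distrib, hcount hk, hcount hl]
    _ ≤ _ := Finset.abs_sum_le_sum_abs _ _

section Rates

variable {g : ℕ → ℕ → ℕ → ℝ}

lemma Sig_nonneg (hgnn : ∀ k α β, 0 ≤ g k α β) (k α β : ℕ) : 0 ≤ Sig g k α β :=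
  Finset.sum_nonneg fun i _ => hgnn i α β

lemma Sig_antitone (hgnn : ∀ k α β, 0 ≤ g k α β) (α β : ℕ) :
    Antitone fun k => Sig g k α β := fun _ _ hjk =>
  Finset.sum_le_sum_of_subset_of_nonneg (Finset.Icc_subset_Icc (by omega) le_rfl)
    fun i _ _ => hgnn i α β

lemma Sig_of_le {k α : ℕ} (h : α ≤ k) (β : ℕ) : Sig g k α β = 0 := by
  rw [Sig, Finset.Icc_eq_empty (by omega), Finset.sum_empty]

lemma Sig_eq_sum_Icc (hgz : ∀ k α β, α < k ∨ α = 0 → g k α β = 0) {α N : ℕ} (hαN : α ≤ N)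
    (k β : ℕ) :
    Sig g k α β = ∑ i ∈ Finset.Icc (k + 1) N, g i α β :=
  Finset.sum_subset (Finset.Icc_subset_Icc le_rfl hαN) fun i hi hiα =>
    hgz i α β (Or.inl (by simp only [Finset.mem_Icc] at hi hiα; omega))

lemma g_succ_eq_Sig_sub (hgz : ∀ k α β, α < k ∨ α = 0 → g k α β = 0) (k α β : ℕ) :
    g (k + 1) α β = Sig g k α β - Sig g (k + 1) α β := by
  rcases le_or_gt (k + 1) α with h | h
  · rw [Sig, Sig, ← Finset.insert_Icc_succ_left_eq_Icc h, Order.succ_eq_add_one,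
      Finset.sum_insert (by simp)]
    ring
  · rw [hgz _ _ _ (Or.inl h), Sig_of_le (by omega), Sig_of_le (by omega), sub_zero]

/-- Tile `k` of `[0, T]` is `[rateEdge g T α β (k + 1), rateEdge g T α β k]`, i.e. `[Σ^k, Σ^(k-1)]`
for `k ≥ 1` and `[Σ^0, T]` for `k = 0`. -/
def rateEdge (g : ℕ → ℕ → ℕ → ℝ) (T : ℝ) (α β : ℕ) : ℕ → ℝ
  | 0 => T
  | k + 1 => Sig g k α β

lemma rateEdge_antitone (hgnn : ∀ k α β, 0 ≤ g k α β) {T : ℝ} {α β : ℕ}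
    (hT : Sig g 0 α β ≤ T) : Antitone (rateEdge g T α β) :=
  antitone_nat_of_succ_le fun
    | 0 => hT
    | k + 1 => Sig_antitone hgnn α β k.le_succ

lemma Gc_eq_overlap (hgnn : ∀ k α β, 0 ≤ g k α β)
    (hgz : ∀ k α β, α < k ∨ α = 0 → g k α β = 0) (k l α β γ δ : ℕ) :
    Gc g k l α β γ δ =
      overlap (rateEdge g (max (Sig g 0 α β) (Sig g 0 γ δ)) α β (k + 1))
        (rateEdge g (max (Sig g 0 α β) (Sig g 0 γ δ)) α β k)
        (rateEdge g (max (Sig g 0 α β) (Sig g 0 γ δ)) γ δ (l + 1))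
        (rateEdge g (max (Sig g 0 α β) (Sig g 0 γ δ)) γ δ l) := by
  have hA := Sig_antitone hgnn α β
  have hB := Sig_antitone hgnn γ δ
  have hT₁ := le_max_left (Sig g 0 α β) (Sig g 0 γ δ)
  have hT₂ := le_max_right (Sig g 0 α β) (Sig g 0 γ δ)
  rcases k with _ | k <;> rcases l with _ | l
  · simp [Gc, rateEdge, overlap]
  · have := hB l.le_succ
    have := hB l.zero_le
    simp only [Gc, rateEdge, overlap, if_pos, if_neg l.succ_ne_zero, g_succ_eq_Sig_sub hgz]
    simp only [min_def, max_def]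
    split_ifs <;> linarith
  · have := hA k.le_succ
    have := hA k.zero_le
    simp only [Gc, rateEdge, overlap, if_pos, if_neg k.succ_ne_zero, g_succ_eq_Sig_sub hgz]
    simp only [min_def, max_def]
    split_ifs <;> linarith
  · have := hA k.le_succ
    have := hB l.le_succ
    simp only [Gc, rateEdge, overlap, if_neg k.succ_ne_zero, if_neg l.succ_ne_zero,
      g_succ_eq_Sig_sub hgz]
    simp only [min_def, max_def]
    split_ifs <;> linarith

lemma Gc_nonneg (hgnn : ∀ k α β, 0 ≤ g k α β)
    (hgz : ∀ k α β, α < k ∨ α = 0 → g k α β = 0) (k l α β γ δ : ℕ) :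
    0 ≤ Gc g k l α β γ δ := by
  rw [Gc_eq_overlap hgnn hgz]
  exact overlap_nonneg _ _ _ _

lemma Gc_comm (hgnn : ∀ k α β, 0 ≤ g k α β)
    (hgz : ∀ k α β, α < k ∨ α = 0 → g k α β = 0) (k l α β γ δ : ℕ) :
    Gc g k l α β γ δ = Gc g l k γ δ α β := by
  rw [Gc_eq_overlap hgnn hgz, Gc_eq_overlap hgnn hgz, max_comm, overlap_comm]

lemma sum_Ico_sum_range_Gc (hgnn : ∀ k α β, 0 ≤ g k α β)
    (hgz : ∀ k α β, α < k ∨ α = 0 → g k α β = 0) {α N j : ℕ} (hα : α ≤ N) (hj : j ≤ N)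
    (β γ δ : ℕ) :
    ∑ k ∈ Finset.Ico (j + 1) (N + 1), ∑ l ∈ Finset.range (j + 1), Gc g k l α β γ δ =
      max 0 (Sig g j α β - Sig g j γ δ) := by
  set T := max (Sig g 0 α β) (Sig g 0 γ δ) with hT
  have hA := rateEdge_antitone hgnn (le_max_left (Sig g 0 α β) (Sig g 0 γ δ))
  have hB := rateEdge_antitone hgnn (le_max_right (Sig g 0 α β) (Sig g 0 γ δ))
  calc ∑ k ∈ Finset.Ico (j + 1) (N + 1), ∑ l ∈ Finset.range (j + 1), Gc g k l α β γ δ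
      = ∑ k ∈ Finset.Ico (j + 1) (N + 1), overlap (rateEdge g T α β (k + 1))
          (rateEdge g T α β k) (rateEdge g T γ δ (j + 1)) (rateEdge g T γ δ 0) := by
        refine Finset.sum_congr rfl fun k _ => ?_
        simp only [Gc_eq_overlap hgnn hgz, ← hT, overlap_comm (rateEdge g T α β (k + 1))]
        rw [Finset.range_eq_Ico, sum_Ico_overlap hB _ _ (Nat.zero_le _)]
    _ = overlap (rateEdge g T α β (N + 1)) (rateEdge g T α β (j + 1))
          (rateEdge g T γ δ (j + 1)) (rateEdge g T γ δ 0) :=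
        sum_Ico_overlap hA _ _ (by omega)
    _ = max 0 (Sig g j α β - Sig g j γ δ) := by
        have hjT : Sig g j α β ≤ T := (Sig_antitone hgnn α β j.zero_le).trans (le_max_left _ _)
        simp only [rateEdge, overlap, Sig_of_le hα, max_eq_right (Sig_nonneg hgnn j γ δ),
          min_eq_left hjT]

lemma sum_range_sum_Ico_Gc (hgnn : ∀ k α β, 0 ≤ g k α β)
    (hgz : ∀ k α β, α < k ∨ α = 0 → g k α β = 0) {γ N j : ℕ} (hγ : γ ≤ N) (hj : j ≤ N)
    (α β δ : ℕ) :
    ∑ k ∈ Finset.range (j + 1), ∑ l ∈ Finset.Ico (j + 1) (N + 1), Gc g k l α β γ δ =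
      max 0 (Sig g j γ δ - Sig g j α β) := by
  rw [Finset.sum_comm, ← sum_Ico_sum_range_Gc hgnn hgz hγ hj]
  exact Finset.sum_congr rfl fun l _ => Finset.sum_congr rfl fun k _ => Gc_comm hgnn hgz _ _ _ _ _ _

lemma sum_sum_Gc_mul_abs_ite_sub (hgnn : ∀ k α β, 0 ≤ g k α β)
    (hgz : ∀ k α β, α < k ∨ α = 0 → g k α β = 0) {α γ N j : ℕ} (hα : α ≤ N) (hγ : γ ≤ N)
    (hj : j ≤ N) (β δ : ℕ) :
    ∑ k ∈ Finset.range (N + 1), ∑ l ∈ Finset.range (N + 1), Gc g k l α β γ δ *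
        |(if j < k then (1 : ℝ) else 0) - if j < l then 1 else 0| =
      |Sig g j α β - Sig g j γ δ| := by
  have hsplit (f : ℕ → ℝ) : ∑ i ∈ Finset.range (N + 1), f i =
      ∑ i ∈ Finset.range (j + 1), f i + ∑ i ∈ Finset.Ico (j + 1) (N + 1), f i :=
    (Finset.sum_range_add_sum_Ico f (by omega)).symm
  have hlow : ∀ k ∈ Finset.range (j + 1), ∑ l ∈ Finset.range (N + 1), Gc g k l α β γ δ *
      |(if j < k then (1 : ℝ) else 0) - if j < l then 1 else 0| =
        ∑ l ∈ Finset.Ico (j + 1) (N + 1), Gc g k l α β γ δ := by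
    intro k hk
    rw [Finset.mem_range] at hk
    rw [hsplit, Finset.sum_eq_zero fun l hl => ?_, zero_add]
    · refine Finset.sum_congr rfl fun l hl => ?_
      rw [Finset.mem_Ico] at hl
      simp [show ¬j < k by omega, show j < l by omega]
    · rw [Finset.mem_range] at hl
      simp [show ¬j < k by omega, show ¬j < l by omega]
  have hhigh : ∀ k ∈ Finset.Ico (j + 1) (N + 1), ∑ l ∈ Finset.range (N + 1),
      Gc g k l α β γ δ * |(if j < k then (1 : ℝ) else 0) - if j < l then 1 else 0| =
        ∑ l ∈ Finset.range (j + 1), Gc g k l α β γ δ := by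
    intro k hk
    rw [Finset.mem_Ico] at hk
    rw [hsplit, Finset.sum_eq_zero (s := Finset.Ico _ _) fun l hl => ?_, add_zero]
    · refine Finset.sum_congr rfl fun l hl => ?_
      rw [Finset.mem_range] at hl
      simp [show j < k by omega, show ¬j < l by omega]
    · rw [Finset.mem_Ico] at hl
      simp [show j < k by omega, show j < l by omega]
  rw [hsplit, Finset.sum_congr rfl hlow, Finset.sum_congr rfl hhigh,
    sum_range_sum_Ico_Gc hgnn hgz hγ hj, sum_Ico_sum_range_Gc hgnn hgz hα hj, add_comm,
    max_comm 0, max_comm 0, ← neg_sub (Sig g j α β), max_zero_add_max_neg_zero_eq_abs_self]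

lemma sum_abs_Sig_sub_le (hgz : ∀ k α β, α < k ∨ α = 0 → g k α β = 0) {α γ N : ℕ}
    (hα : α ≤ N) (hγ : γ ≤ N) (β δ : ℕ) :
    ∑ j ∈ Finset.range N, |Sig g j α β - Sig g j γ δ| ≤
      ∑ i ∈ Finset.Icc 1 N, (i : ℝ) * |g i α β - g i γ δ| := by
  calc ∑ j ∈ Finset.range N, |Sig g j α β - Sig g j γ δ|
      ≤ ∑ j ∈ Finset.range N, ∑ i ∈ Finset.Icc (j + 1) N, |g i α β - g i γ δ| :=
        Finset.sum_le_sum fun j _ => by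
          rw [Sig_eq_sum_Icc hgz hα, Sig_eq_sum_Icc hgz hγ, ← Finset.sum_sub_distrib]
          exact Finset.abs_sum_le_sum_abs _ _
    _ = ∑ i ∈ Finset.Icc 1 N, ∑ _j ∈ Finset.range i, |g i α β - g i γ δ| :=
        Finset.sum_comm' fun j i => by
          simp only [Finset.mem_range, Finset.mem_Icc]
          omega
    _ = ∑ i ∈ Finset.Icc 1 N, (i : ℝ) * |g i α β - g i γ δ| := by
        simp only [Finset.sum_const, Finset.card_range, nsmul_eq_mul]

lemma sum_Gc_mul_abs_sub_le (hgnn : ∀ k α β, 0 ≤ g k α β)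
    (hgz : ∀ k α β, α < k ∨ α = 0 → g k α β = 0) (α β γ δ : ℕ) :
    ∑ k ∈ Finset.range (α + 1), ∑ l ∈ Finset.range (γ + 1), Gc g k l α β γ δ * |(k : ℝ) - l| ≤
      ∑ i ∈ Finset.Icc 1 (max α γ), (i : ℝ) * |g i α β - g i γ δ| := by
  set N := max α γ
  have hα : α ≤ N := le_max_left α γ
  have hγ : γ ≤ N := le_max_right α γ
  have hterm (k l : ℕ) : 0 ≤ Gc g k l α β γ δ * |(k : ℝ) - l| :=
    mul_nonneg (Gc_nonneg hgnn hgz _ _ _ _ _ _) (abs_nonneg _)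
  calc ∑ k ∈ Finset.range (α + 1), ∑ l ∈ Finset.range (γ + 1), Gc g k l α β γ δ * |(k : ℝ) - l|
      ≤ ∑ k ∈ Finset.range (N + 1), ∑ l ∈ Finset.range (N + 1),
          Gc g k l α β γ δ * |(k : ℝ) - l| := by
        refine (Finset.sum_le_sum fun k _ => Finset.sum_le_sum_of_subset_of_nonneg
          (Finset.range_subset_range.2 (Nat.succ_le_succ hγ)) fun l _ _ => hterm k l).trans ?_
        exact Finset.sum_le_sum_of_subset_of_nonneg
          (Finset.range_subset_range.2 (Nat.succ_le_succ hα))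
          fun k _ _ => Finset.sum_nonneg fun l _ => hterm k l
    _ ≤ ∑ k ∈ Finset.range (N + 1), ∑ l ∈ Finset.range (N + 1), ∑ j ∈ Finset.range N,
          Gc g k l α β γ δ * |(if j < k then (1 : ℝ) else 0) - if j < l then 1 else 0| := by
        refine Finset.sum_le_sum fun k hk => Finset.sum_le_sum fun l hl => ?_
        rw [Finset.mem_range] at hk hl
        rw [← Finset.mul_sum]
        exact mul_le_mul_of_nonneg_left (abs_natCast_sub_le_sum_abs_ite_sub (by omega) (by omega))
          (Gc_nonneg hgnn hgz _ _ _ _ _ _)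
    _ = ∑ j ∈ Finset.range N, ∑ k ∈ Finset.range (N + 1), ∑ l ∈ Finset.range (N + 1),
          Gc g k l α β γ δ * |(if j < k then (1 : ℝ) else 0) - if j < l then 1 else 0| :=
        (Finset.sum_congr rfl fun _ _ => Finset.sum_comm).trans Finset.sum_comm
    _ = ∑ j ∈ Finset.range N, |Sig g j α β - Sig g j γ δ| :=
        Finset.sum_congr rfl fun j hj =>
          sum_sum_Gc_mul_abs_ite_sub hgnn hgz hα hγ (Finset.mem_range.1 hj).le β δ
    _ ≤ _ := sum_abs_Sig_sub_le hgz hα hγ β δ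

end Rates

lemma abs_sum_sum_mul_le {ι κ : Type*} (s : Finset ι) (t : ι → Finset κ) {w F B : ι → κ → ℝ}
    (hw : ∀ i ∈ s, ∀ j ∈ t i, 0 ≤ w i j) (hF : ∀ i ∈ s, ∀ j ∈ t i, |F i j| ≤ B i j) :
    |∑ i ∈ s, ∑ j ∈ t i, w i j * F i j| ≤ ∑ i ∈ s, ∑ j ∈ t i, w i j * B i j :=
  (Finset.abs_sum_le_sum_abs _ _).trans <| Finset.sum_le_sum fun i hi =>
    (Finset.abs_sum_le_sum_abs _ _).trans <| Finset.sum_le_sum fun j hj => by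
      rw [abs_mul, abs_of_nonneg (hw i hi j hj)]
      exact mul_le_mul_of_nonneg_left (hF i hi j hj) (hw i hi j hj)

lemma abs_abs_mul_sub_abs_mul_le {a : ℝ} (ha : 0 ≤ a) (u v : ℝ) :
    |(|u| * a - |v| * a)| ≤ |u - v| * a := by
  rw [← sub_mul, abs_mul, abs_of_nonneg ha]
  exact mul_le_mul_of_nonneg_right (abs_abs_sub_abs_le_abs_sub u v) ha

section Configurations

variable {X : Type*}

def weightedDist (s : Finset X) (a : X → ℝ) (η η' : X → ℕ) : ℝ :=
  ∑ z ∈ s, |(η z : ℝ) - η' z| * a z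

lemma weightedDist_nonneg {s : Finset X} {a : X → ℝ} (ha : ∀ z, 0 ≤ a z) (η η' : X → ℕ) :
    0 ≤ weightedDist s a η η' :=
  Finset.sum_nonneg fun z _ => mul_nonneg (abs_nonneg _) (ha z)

variable [DecidableEq X]

/-- `S^k_{x,y} η` of the paper, meaningful for `k ≤ η x`. -/
def migrate (η : X → ℕ) (x y : X) (k : ℕ) : X → ℕ := fun z =>
  if z = x then η x - k else if z = y then η y + k else η z

lemma abs_weightedDist_migrate_sub_le {s : Finset X} {a : X → ℝ} (ha : ∀ z, 0 ≤ a z)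
    {x y : X} (hx : x ∈ s) (hy : y ∈ s) (hxy : x ≠ y) {η η' : X → ℕ} {k l : ℕ}
    (hk : k ≤ η x) (hl : l ≤ η' x) :
    |weightedDist s a (migrate η x y k) (migrate η' x y l) - weightedDist s a η η'| ≤
      |(k : ℝ) - l| * (a x + a y) := by
  set φ : X → ℝ := fun z =>
    |(migrate η x y k z : ℝ) - migrate η' x y l z| * a z - |(η z : ℝ) - η' z| * a z
  have hφ : ∀ z ∈ s, z ∉ ({x, y} : Finset X) → φ z = 0 := by
    intro z _ hz
    simp only [Finset.mem_insert, Finset.mem_singleton, not_or] at hz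
    simp [φ, migrate, hz.1, hz.2]
  have hφx : |φ x| ≤ |(k : ℝ) - l| * a x := by
    have hx' : φ x = |(η x : ℝ) - k - (η' x - l)| * a x - |(η x : ℝ) - η' x| * a x := by
      simp [φ, migrate, Nat.cast_sub hk, Nat.cast_sub hl]
    rw [hx', ← abs_neg ((k : ℝ) - l),
      show -((k : ℝ) - l) = (η x : ℝ) - k - (η' x - l) - (η x - η' x) by ring]
    exact abs_abs_mul_sub_abs_mul_le (ha x) _ _
  have hφy : |φ y| ≤ |(k : ℝ) - l| * a y := by
    have hy' : φ y = |(η y : ℝ) + k - (η' y + l)| * a y - |(η y : ℝ) - η' y| * a y := by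
      simp [φ, migrate, hxy.symm]
    rw [hy', show (k : ℝ) - l = (η y : ℝ) + k - (η' y + l) - (η y - η' y) by ring]
    exact abs_abs_mul_sub_abs_mul_le (ha y) _ _
  calc |weightedDist s a (migrate η x y k) (migrate η' x y l) - weightedDist s a η η'|
      = |φ x + φ y| := by
        rw [weightedDist, weightedDist, ← Finset.sum_sub_distrib,
          ← Finset.sum_subset (Finset.insert_subset hx (Finset.singleton_subset_iff.2 hy)) hφ,
          Finset.sum_pair hxy]
    _ ≤ |φ x| + |φ y| := abs_add_le _ _
    _ ≤ |(k : ℝ) - l| * (a x + a y) := by linarith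

lemma abs_sum_Gc_mul_weightedDist_sub_le {g : ℕ → ℕ → ℕ → ℝ} (hgnn : ∀ k α β, 0 ≤ g k α β)
    (hgz : ∀ k α β, α < k ∨ α = 0 → g k α β = 0) {C : ℝ}
    (hC2 : ∀ α β γ δ : ℕ, ∑ k ∈ Finset.Icc 1 (max α γ), (k : ℝ) * |g k α β - g k γ δ| ≤
      C * (|(α : ℝ) - (γ : ℝ)| + |(β : ℝ) - (δ : ℝ)|))
    {s : Finset X} {a : X → ℝ} (ha : ∀ z, 0 ≤ a z) {x y : X} (hx : x ∈ s) (hy : y ∈ s)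
    (hxy : x ≠ y) (η η' : X → ℕ) :
    |∑ k ∈ Finset.range (η x + 1), ∑ l ∈ Finset.range (η' x + 1),
        Gc g k l (η x) (η y) (η' x) (η' y) *
          (weightedDist s a (migrate η x y k) (migrate η' x y l) - weightedDist s a η η')| ≤
      C * ((|(η x : ℝ) - η' x| + |(η y : ℝ) - η' y|) * (a x + a y)) := by
  calc _ ≤ ∑ k ∈ Finset.range (η x + 1), ∑ l ∈ Finset.range (η' x + 1),
          Gc g k l (η x) (η y) (η' x) (η' y) * (|(k : ℝ) - l| * (a x + a y)) :=
        abs_sum_sum_mul_le _ _ (fun k _ l _ => Gc_nonneg hgnn hgz _ _ _ _ _ _)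
          fun k hk l hl => abs_weightedDist_migrate_sub_le ha hx hy hxy
            (Nat.lt_succ_iff.1 (Finset.mem_range.1 hk)) (Nat.lt_succ_iff.1 (Finset.mem_range.1 hl))
    _ = (∑ k ∈ Finset.range (η x + 1), ∑ l ∈ Finset.range (η' x + 1),
          Gc g k l (η x) (η y) (η' x) (η' y) * |(k : ℝ) - l|) * (a x + a y) := by
        simp only [Finset.sum_mul, mul_assoc]
    _ ≤ C * (|(η x : ℝ) - η' x| + |(η y : ℝ) - η' y|) * (a x + a y) :=
        mul_le_mul_of_nonneg_right ((sum_Gc_mul_abs_sub_le hgnn hgz _ _ _ _).trans (hC2 _ _ _ _))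
          (add_nonneg (ha x) (ha y))
    _ = _ := mul_assoc _ _ _

end Configurations

section Kernel

variable {X : Type*} {p : X → X → ℝ} {a : X → ℝ}

lemma sum_mul_add_le_of_hasSum_one {x : X} (hp : ∀ y, 0 ≤ p x y) (ha : ∀ y, 0 ≤ a y)
    (hrow : HasSum (fun y => p x y) 1) (hpa : Summable fun y => p x y * a y) {M : ℝ}
    (hM : ∑' y, p x y * a y ≤ M * a x) (s : Finset X) :
    ∑ y ∈ s, p x y * (a x + a y) ≤ (1 + M) * a x :=
  calc ∑ y ∈ s, p x y * (a x + a y) = (∑ y ∈ s, p x y) * a x + ∑ y ∈ s, p x y * a y := by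
        rw [Finset.sum_mul, ← Finset.sum_add_distrib]
        exact Finset.sum_congr rfl fun _ _ => by ring
    _ ≤ 1 * a x + M * a x :=
        add_le_add (mul_le_mul_of_nonneg_right (sum_le_hasSum s (fun y _ => hp y) hrow) (ha x))
          ((hpa.sum_le_tsum s fun y _ => mul_nonneg (hp y) (ha y)).trans hM)
    _ = (1 + M) * a x := by ring

lemma sum_mul_add_le_of_tsum_le {y : X} (hp : ∀ x, 0 ≤ p x y) (ha : ∀ x, 0 ≤ a x)
    (hcol : Summable fun x => p x y) {mp : ℝ} (hmp : ∑' x, p x y ≤ mp)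
    (hap : Summable fun x => a x * p x y) {M : ℝ} (hM : ∑' x, a x * p x y ≤ M * a y)
    (s : Finset X) :
    ∑ x ∈ s, p x y * (a x + a y) ≤ (M + mp) * a y :=
  calc ∑ x ∈ s, p x y * (a x + a y) = ∑ x ∈ s, a x * p x y + (∑ x ∈ s, p x y) * a y := by
        rw [Finset.sum_mul, ← Finset.sum_add_distrib]
        exact Finset.sum_congr rfl fun _ _ => by ring
    _ ≤ M * a y + mp * a y :=
        add_le_add ((hap.sum_le_tsum s fun x _ => mul_nonneg (ha x) (hp x)).trans hM)
          (mul_le_mul_of_nonneg_right ((hcol.sum_le_tsum s fun x _ => hp x).trans hmp) (ha y))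
    _ = (M + mp) * a y := by ring

lemma sum_sum_sdiff_comm [DecidableEq X] (s : Finset X) (f : X → X → ℝ) :
    ∑ x ∈ s, ∑ y ∈ s \ {x}, f x y = ∑ y ∈ s, ∑ x ∈ s \ {y}, f x y :=
  Finset.sum_comm' fun x y => by
    simp only [Finset.mem_sdiff, Finset.mem_singleton]
    grind

lemma sum_sum_sdiff_mul_le [DecidableEq X] (s : Finset X) {d : X → ℝ} (hd : ∀ z ∈ s, 0 ≤ d z)
    {c₁ c₂ : ℝ} (h₁ : ∀ x ∈ s, ∑ y ∈ s \ {x}, p x y * (a x + a y) ≤ c₁ * a x)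
    (h₂ : ∀ y ∈ s, ∑ x ∈ s \ {y}, p x y * (a x + a y) ≤ c₂ * a y) :
    ∑ x ∈ s, ∑ y ∈ s \ {x}, p x y * ((d x + d y) * (a x + a y)) ≤
      (c₁ + c₂) * ∑ z ∈ s, d z * a z :=
  calc ∑ x ∈ s, ∑ y ∈ s \ {x}, p x y * ((d x + d y) * (a x + a y))
      = ∑ x ∈ s, ∑ y ∈ s \ {x}, d x * (p x y * (a x + a y)) +
          ∑ x ∈ s, ∑ y ∈ s \ {x}, d y * (p x y * (a x + a y)) := by
        rw [← Finset.sum_add_distrib]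
        refine Finset.sum_congr rfl fun x _ => ?_
        rw [← Finset.sum_add_distrib]
        exact Finset.sum_congr rfl fun y _ => by ring
    _ = ∑ x ∈ s, d x * ∑ y ∈ s \ {x}, p x y * (a x + a y) +
          ∑ y ∈ s, d y * ∑ x ∈ s \ {y}, p x y * (a x + a y) := by
        rw [sum_sum_sdiff_comm s fun x y => d y * (p x y * (a x + a y))]
        simp only [Finset.mul_sum]
    _ ≤ ∑ x ∈ s, d x * (c₁ * a x) + ∑ y ∈ s, d y * (c₂ * a y) :=
        add_le_add (Finset.sum_le_sum fun x hx => mul_le_mul_of_nonneg_left (h₁ x hx) (hd x hx))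
          (Finset.sum_le_sum fun y hy => mul_le_mul_of_nonneg_left (h₂ y hy) (hd y hy))
    _ = (c₁ + c₂) * ∑ z ∈ s, d z * a z := by
        rw [Finset.mul_sum, ← Finset.sum_add_distrib]
        exact Finset.sum_congr rfl fun _ _ => by ring

end Kernel

theorem stmt14_general
    {X : Type*} [DecidableEq X]
    (p : X → X → ℝ) (hpnn : ∀ x y : X, 0 ≤ p x y)
    (hrow : ∀ x : X, HasSum (fun y => p x y) 1)
    (mp : ℝ) (hcolsum : ∀ y : X, Summable (fun x => p x y))
    (hmp : ∀ y : X, (∑' x, p x y) ≤ mp)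
    (a : X → ℝ) (hapos : ∀ x : X, 0 < a x)
    (M : ℝ)
    (ha1 : ∀ x : X, Summable (fun y => p x y * a y))
    (ha2 : ∀ x : X, Summable (fun y => a y * p y x))
    (hM : ∀ x : X, (∑' y, p x y * a y) + (∑' y, a y * p y x) ≤ M * a x)
    (g : ℕ → ℕ → ℕ → ℝ)
    (hgnn : ∀ k α β : ℕ, 0 ≤ g k α β)
    (hgz : ∀ k α β : ℕ, α < k ∨ α = 0 → g k α β = 0)
    (C : ℝ) (hC : 0 < C)
    (hC2 : ∀ α β γ δ : ℕ,
      ∑ k ∈ Finset.Icc 1 (max α γ), (k : ℝ) * |g k α β - g k γ δ|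
        ≤ C * (|(α : ℝ) - (γ : ℝ)| + |(β : ℝ) - (δ : ℝ)|))
    (Xn : Finset X)
    (η η' : X → ℕ) :
    |∑ x ∈ Xn, ∑ y ∈ Xn \ {x}, p x y *
        ∑ k ∈ Finset.range (η x + 1), ∑ l ∈ Finset.range (η' x + 1),
          Gc g k l (η x) (η y) (η' x) (η' y) *
            ((∑ z ∈ Xn,
                |((if z = x then η x - k else if z = y then η y + k else η z : ℕ) : ℝ)
                  - ((if z = x then η' x - l else if z = y then η' y + l else η' z : ℕ) : ℝ)|
                  * a z)
              - ∑ z ∈ Xn, |(η z : ℝ) - (η' z : ℝ)| * a z)|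
      ≤ 2 * C * (1 + mp + M) * ∑ z ∈ Xn, |(η z : ℝ) - (η' z : ℝ)| * a z := by
  obtain rfl | ⟨x₀, -⟩ := Xn.eq_empty_or_nonempty
  · simp
  have ha (z : X) : 0 ≤ a z := (hapos z).le
  have hmp₀ : 0 ≤ mp := (tsum_nonneg fun x => hpnn x x₀).trans (hmp x₀)
  have hM₁ (x : X) : ∑' y, p x y * a y ≤ M * a x := by
    linarith [hM x, (tsum_nonneg fun y => mul_nonneg (ha y) (hpnn y x) : 0 ≤ ∑' y, a y * p y x)]
  have hM₂ (y : X) : ∑' x, a x * p x y ≤ M * a y := by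
    linarith [hM y, (tsum_nonneg fun x => mul_nonneg (hpnn y x) (ha x) : 0 ≤ ∑' x, p y x * a x)]
  have hpairs := sum_sum_sdiff_mul_le Xn (d := fun z => |(η z : ℝ) - η' z|)
    (fun z _ => abs_nonneg _)
    (fun x _ => sum_mul_add_le_of_hasSum_one (hpnn x) ha (hrow x) (ha1 x) (hM₁ x) _)
    (fun y _ => sum_mul_add_le_of_tsum_le (hpnn · y) ha (hcolsum y) (hmp y) (ha2 y) (hM₂ y) _)
  have hD := weightedDist_nonneg ha (s := Xn) η η'
  -- The inner distances in the goal are `weightedDist` of `migrate`d configurations by `rfl`.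
  calc _ ≤ ∑ x ∈ Xn, ∑ y ∈ Xn \ {x}, p x y *
          (C * ((|(η x : ℝ) - η' x| + |(η y : ℝ) - η' y|) * (a x + a y))) :=
        abs_sum_sum_mul_le _ _ (fun x _ y _ => hpnn x y) fun x hx y hy =>
          abs_sum_Gc_mul_weightedDist_sub_le hgnn hgz hC2 ha hx (Finset.mem_sdiff.1 hy).1
            (Ne.symm (Finset.notMem_singleton.1 (Finset.mem_sdiff.1 hy).2)) η η'
    _ = C * ∑ x ∈ Xn, ∑ y ∈ Xn \ {x}, p x y *
          ((|(η x : ℝ) - η' x| + |(η y : ℝ) - η' y|) * (a x + a y)) := by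
        simp only [Finset.mul_sum, mul_left_comm]
    _ ≤ C * ((1 + M + (M + mp)) * weightedDist Xn a η η') :=
        mul_le_mul_of_nonneg_left hpairs hC.le
    _ ≤ 2 * C * (1 + mp + M) * weightedDist Xn a η η' := by
        nlinarith [mul_nonneg (mul_nonneg hC.le hD) hmp₀, mul_nonneg hC.le hD]

/-- bound on the coupled generator applied to the distance
function, Lemma 7.3 of the paper. -/
theorem stmt14
    {X : Type*} [Countable X] [DecidableEq X]
    (p : X → X → ℝ) (hpnn : ∀ x y : X, 0 ≤ p x y)
    (hrow : ∀ x : X, HasSum (fun y => p x y) 1)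
    (mp : ℝ) (hcolsum : ∀ y : X, Summable (fun x => p x y))
    (hmp : ∀ y : X, (∑' x, p x y) ≤ mp)
    (a : X → ℝ) (hapos : ∀ x : X, 0 < a x)
    (M : ℝ)
    (ha1 : ∀ x : X, Summable (fun y => p x y * a y))
    (ha2 : ∀ x : X, Summable (fun y => a y * p y x))
    (hM : ∀ x : X, (∑' y, p x y * a y) + (∑' y, a y * p y x) ≤ M * a x)
    (g : ℕ → ℕ → ℕ → ℝ)
    (hgnn : ∀ k α β : ℕ, 0 ≤ g k α β)
    (hg0 : ∀ α β : ℕ, g 0 α β = 0)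
    (hgz : ∀ k α β : ℕ, α < k ∨ α = 0 → g k α β = 0)
    (C : ℝ) (hC : 0 < C)
    (hC2 : ∀ α β γ δ : ℕ,
      ∑ k ∈ Finset.Icc 1 (max α γ), (k : ℝ) * |g k α β - g k γ δ|
        ≤ C * (|(α : ℝ) - (γ : ℝ)| + |(β : ℝ) - (δ : ℝ)|))
    (Xn : Finset X)
    (η η' : X → ℕ) :
    |∑ x ∈ Xn, ∑ y ∈ Xn \ {x}, p x y *
        ∑ k ∈ Finset.range (η x + 1), ∑ l ∈ Finset.range (η' x + 1),
          Gc g k l (η x) (η y) (η' x) (η' y) *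
            ((∑ z ∈ Xn,
                |((if z = x then η x - k else if z = y then η y + k else η z : ℕ) : ℝ)
                  - ((if z = x then η' x - l else if z = y then η' y + l else η' z : ℕ) : ℝ)|
                  * a z)
              - ∑ z ∈ Xn, |(η z : ℝ) - (η' z : ℝ)| * a z)|
      ≤ 2 * C * (1 + mp + M) * ∑ z ∈ Xn, |(η z : ℝ) - (η' z : ℝ)| * a z :=
  stmt14_general p hpnn hrow mp hcolsum hmp a hapos M ha1 ha2 hM g hgnn hgz C hC hC2 Xn η η'
end
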